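/- arXiv:1509.06992 — 2 statements merged into one kernel-verified Lean document; each statement's English description precedes it below -/
import Mathlib

section
/- Under Assumption 1 and with θ̂ > 0, the half-return map satisfies the strict energy bound P(v)² < v² + (k/m)·θ̂² for every v ≥ 0; equivalently, the kinetic energy just before a jump is strictly smaller than the total mechanical energy just after the preceding jump: (1/2)·m·P(v)² < (1/2)·m·v² + (1/2)·k·θ̂². -/
/-- The system matrix `A = ![![0, 1], ![-k/m, -c/m]]`. -/
noncomputable def Amat (m c k : ℝ) : Matrix (Fin 2) (Fin 2) ℝ :=
  ![![0, 1], ![-k/m, -c/m]]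

/-- The flow map `x ↦ exp(t A) x` (matrix exponential). -/
noncomputable def flow (m c k : ℝ) (t : ℝ) (x : Fin 2 → ℝ) : Fin 2 → ℝ :=
  (NormedSpace.exp (t • Amat m c k)).mulVec x

/-- The total mechanical energy `E(x) = (1/2)·m·x₂² + (1/2)·k·x₁²`. -/
noncomputable def energy (m k : ℝ) (x : Fin 2 → ℝ) : ℝ :=
  (1 / 2) * m * (x 1) ^ 2 + (1 / 2) * k * (x 0) ^ 2

/-- `τ` is the first-hitting-time map of the jump set `D = {x : x₁ = 0}`:
for every `x ≠ 0`, `τ x` is the least `t > 0` with `(exp(t A) x)₁ = 0`. -/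
def IsFirstHittingTime (m c k : ℝ) (τ : (Fin 2 → ℝ) → ℝ) : Prop :=
  ∀ x : Fin 2 → ℝ, x ≠ 0 → IsLeast {t : ℝ | 0 < t ∧ flow m c k t x 0 = 0} (τ x)

/-- The half-return map `P(v) = −(exp(τ((θ̂, v)) A) · (θ̂, v))₂`. -/
noncomputable def halfReturn (m c k θ : ℝ) (τ : (Fin 2 → ℝ) → ℝ) (v : ℝ) : ℝ :=
  -(flow m c k (τ ![θ, v]) ![θ, v] 1)

/-- The dissipated energy `Diss(v) = E((θ̂, v)) − E(exp(τ((θ̂, v)) A)·(θ̂, v))`. -/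
noncomputable def diss (m c k θ : ℝ) (τ : (Fin 2 → ℝ) → ℝ) (v : ℝ) : ℝ :=
  energy m k ![θ, v] - energy m k (flow m c k (τ ![θ, v]) ![θ, v])

attribute [local instance] Matrix.linftyOpNormedRing Matrix.linftyOpNormedAlgebra

/-- Evaluation of `M.mulVec x` at coordinate `i`, as a continuous linear map in `M`. -/
noncomputable def mulVecEvalCLM (x : Fin 2 → ℝ) (i : Fin 2) :
    Matrix (Fin 2) (Fin 2) ℝ →L[ℝ] ℝ :=
  LinearMap.toContinuousLinearMap
    { toFun := fun M => M.mulVec x i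
      map_add' := fun M N => by simp [Matrix.add_mulVec]
      map_smul' := fun r M => by simp [Matrix.smul_mulVec] }

lemma flow_hasDerivAt (m c k : ℝ) (x : Fin 2 → ℝ) (i : Fin 2) (t : ℝ) :
    HasDerivAt (fun s => flow m c k s x i)
      ((Amat m c k).mulVec (flow m c k t x) i) t := by
  have h := hasDerivAt_exp_smul_const' (𝕂 := ℝ) (Amat m c k) t
  have h2 := (mulVecEvalCLM x i).hasFDerivAt.comp_hasDerivAt t h
  have : (mulVecEvalCLM x i) (Amat m c k * NormedSpace.exp (t • Amat m c k))
      = (Amat m c k).mulVec (flow m c k t x) i := by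
    simp [mulVecEvalCLM, flow, ← Matrix.mulVec_mulVec]
    fin_cases i <;> simp [Matrix.mul_apply, Fin.sum_univ_two] <;> ring
  replace h2 := h2.congr_deriv this
  exact h2

lemma flow_zero (m c k : ℝ) (x : Fin 2 → ℝ) : flow m c k 0 x = x := by
  simp [flow]

/-- under Assumption 1 and `θ̂ > 0`, the half-return map satisfies the
strict energy bound `P(v)² < v² + (k/m)·θ̂²` for every `v ≥ 0`; equivalently the
kinetic energy just before a jump is strictly smaller than the total mechanical
energy just after the preceding jump. -/
theorem stmt5 (m c k θ : ℝ) (hm : 0 < m) (hc : 0 < c) (hk : 0 < k)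
    (hud : c ^ 2 < 4 * k * m) (hθ : 0 < θ)
    (τ : (Fin 2 → ℝ) → ℝ) (hτ : IsFirstHittingTime m c k τ) :
    ∀ v : ℝ, 0 ≤ v →
      (halfReturn m c k θ τ v) ^ 2 < v ^ 2 + (k / m) * θ ^ 2 ∧
      (1 / 2) * m * (halfReturn m c k θ τ v) ^ 2
        < (1 / 2) * m * v ^ 2 + (1 / 2) * k * θ ^ 2 := by
  intro v hv
  set x0 : Fin 2 → ℝ := ![θ, v] with hx0
  have hx0ne : x0 ≠ 0 := by
    intro h
    have : x0 0 = 0 := by rw [h]; rfl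
    simp [hx0] at this
    exact absurd this hθ.ne'
  obtain ⟨⟨hτpos, hτzero⟩, _⟩ := hτ x0 hx0ne
  set T := τ x0 with hT
  set X : ℝ → Fin 2 → ℝ := fun t => flow m c k t x0 with hX
  -- coordinate derivatives
  have hd0 : ∀ t, HasDerivAt (fun s => X s 0) (X t 1) t := by
    intro t
    have h := flow_hasDerivAt m c k x0 0 t
    have : (Amat m c k).mulVec (flow m c k t x0) 0 = X t 1 := by
      simp [Amat, Matrix.mulVec, dotProduct, Fin.sum_univ_two, hX]
    rwa [this] at h
  have hd1 : ∀ t, HasDerivAt (fun s => X s 1)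
      (-(k/m) * X t 0 + -(c/m) * X t 1) t := by
    intro t
    have h := flow_hasDerivAt m c k x0 1 t
    have : (Amat m c k).mulVec (flow m c k t x0) 1
        = -(k/m) * X t 0 + -(c/m) * X t 1 := by
      simp [Amat, Matrix.mulVec, dotProduct, Fin.sum_univ_two, hX]
      ring
    rwa [this] at h
  -- energy along the flow
  set E : ℝ → ℝ := fun t => energy m k (X t) with hE
  have hdE : ∀ t, HasDerivAt E (-c * (X t 1) ^ 2) t := by
    intro t
    have h : HasDerivAt E
        ((1/2) * m * (2 * X t 1 * (-(k/m) * X t 0 + -(c/m) * X t 1))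
          + (1/2) * k * (2 * X t 0 * (X t 1))) t := by
      have h1 := ((hd1 t).pow 2).const_mul ((1:ℝ)/2 * m)
      have h0 := ((hd0 t).pow 2).const_mul ((1:ℝ)/2 * k)
      have := h1.add h0
      simpa [hE, energy, Pi.add_def, pow_one, mul_assoc, mul_comm, mul_left_comm] using this
    have heq : (1/2) * m * (2 * X t 1 * (-(k/m) * X t 0 + -(c/m) * X t 1))
          + (1/2) * k * (2 * X t 0 * (X t 1)) = -c * (X t 1) ^ 2 := by
      field_simp
      ring
    rwa [heq] at h
  have hXcont : ∀ i, Continuous (fun t => X t i) := by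
    intro i
    rw [continuous_iff_continuousAt]
    intro t
    exact (flow_hasDerivAt m c k x0 i t).continuousAt
  have hEcont : Continuous E := by
    simp only [hE, energy]
    exact (continuous_const.mul ((hXcont 1).pow 2)).add
      (continuous_const.mul ((hXcont 0).pow 2))
  -- E is antitone on [0, T]
  have hanti : AntitoneOn E (Set.Icc 0 T) := by
    apply antitoneOn_of_deriv_nonpos (convex_Icc 0 T) (hEcont.continuousOn)
    · intro t ht
      exact (hdE t).differentiableAt.differentiableWithinAt
    · intro t ht
      rw [(hdE t).deriv]
      have : (0:ℝ) ≤ c * (X t 1) ^ 2 := by positivity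
      linarith
  have hle : E T ≤ E 0 := hanti (Set.left_mem_Icc.2 hτpos.le) (Set.right_mem_Icc.2 hτpos.le) hτpos.le
  -- strict inequality
  have hlt : E T < E 0 := by
    rcases lt_or_eq_of_le hle with h | h
    · exact h
    exfalso
    -- E is constant on [0, T]; hence X · 1 vanishes on the interior
    have hconst : ∀ t ∈ Set.Icc (0:ℝ) T, E t = E 0 := by
      intro t ht
      have h1 : E t ≤ E 0 := hanti (Set.left_mem_Icc.2 hτpos.le) ht ht.1
      have h2 : E T ≤ E t := hanti ht (Set.right_mem_Icc.2 hτpos.le) ht.2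
      linarith [h.symm ▸ h2]
    have hX1zero : ∀ t ∈ Set.Ioo (0:ℝ) T, X t 1 = 0 := by
      intro t ht
      have hev : E =ᶠ[nhds t] (fun _ => E 0) := by
        filter_upwards [Ioo_mem_nhds ht.1 ht.2] with s hs
        exact hconst s (Set.Ioo_subset_Icc_self hs)
      have h0 : HasDerivAt E 0 t := (hasDerivAt_const t (E 0)).congr_of_eventuallyEq hev
      have := (hdE t).unique h0
      have hX1 : c * (X t 1) ^ 2 = 0 := by linarith [this]
      have := (mul_eq_zero.1 hX1).resolve_left hc.ne'
      exact pow_eq_zero_iff (n := 2) (by norm_num) |>.1 this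
    -- then X · 0 is monotone on [0,T] with zero derivative, contradiction
    have hmono : MonotoneOn (fun t => X t 0) (Set.Icc 0 T) := by
      apply monotoneOn_of_deriv_nonneg (convex_Icc 0 T) ((hXcont 0).continuousOn)
      · intro t ht
        exact (hd0 t).differentiableAt.differentiableWithinAt
      · intro t ht
        rw [(hd0 t).deriv]
        rw [interior_Icc] at ht
        rw [hX1zero t ht]
    have h00 : X 0 0 = θ := by simp [hX, flow_zero, hx0]
    have hT0 : X T 0 = 0 := hτzero
    have := hmono (Set.left_mem_Icc.2 hτpos.le) (Set.right_mem_Icc.2 hτpos.le) hτpos.le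
    simp only at this
    rw [h00, hT0] at this
    linarith
  -- unpack the energies
  have hT0 : X T 0 = 0 := hτzero
  have hET : E T = (1/2) * m * (halfReturn m c k θ τ v) ^ 2 := by
    simp [hE, energy, hT0, halfReturn, hX, hT, hx0]
    exact Or.inr hτzero
  have hE0 : E 0 = (1/2) * m * v ^ 2 + (1/2) * k * θ ^ 2 := by
    simp [hE, hX, energy, flow_zero, hx0]
  have h2 : (1/2) * m * (halfReturn m c k θ τ v) ^ 2
      < (1/2) * m * v ^ 2 + (1/2) * k * θ ^ 2 := by rw [← hET, ← hE0]; exact hlt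
  refine ⟨?_, h2⟩
  have key : m * halfReturn m c k θ τ v ^ 2 < m * (v ^ 2 + k / m * θ ^ 2) := by
    have hmm : m * (v ^ 2 + k / m * θ ^ 2) = m * v ^ 2 + k * θ ^ 2 := by
      field_simp
    rw [hmm]; linarith
  exact (mul_lt_mul_iff_right₀ hm).1 key
end

section
/- (Lemma 2(iii), strict decrease across jumps, return-map form.) Under Assumption 1 and with θ̂ > 0, let v* > 0 be the unique fixed point of the half-return map P. Then for every v > 0 with v ≠ v*: if v > v* then v* < P(v) < v, and if 0 < v < v* then v < P(v) < v*. In particular |P(v) − v*| < |v − v*| for every v > 0 with v ≠ v*. -/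
set_option linter.unusedSectionVars false

open NormedSpace

noncomputable def Bmat (m c k : ℝ) : Matrix (Fin 2) (Fin 2) ℝ :=
  Amat m c k + (c / (2*m)) • 1

lemma Bmat_apply (m c k : ℝ) (i j : Fin 2) :
    Bmat m c k i j = Amat m c k i j + (c / (2*m)) * (1 : Matrix (Fin 2) (Fin 2) ℝ) i j := by
  rw [Bmat, Matrix.add_apply, Matrix.smul_apply, smul_eq_mul]

lemma om_sq (m c k : ℝ) (hm : 0 < m) (hud : c^2 ≤ 4*k*m) :
    (Real.sqrt (4*k*m - c^2) / (2*m))^2 = k/m - (c/(2*m))^2 := by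
  rw [div_pow, Real.sq_sqrt (by linarith)]
  field_simp
  ring

lemma B_sq (m c k : ℝ) (hm : 0 < m) (hud : c^2 ≤ 4*k*m) :
    Bmat m c k * Bmat m c k = (-(Real.sqrt (4*k*m - c^2) / (2*m))^2) • 1 := by
  have h := om_sq m c k hm hud
  ext i j
  fin_cases i <;> fin_cases j <;>
    simp [Bmat_apply, Amat, Matrix.mul_apply, Fin.sum_univ_two, Matrix.one_apply, h] <;>
    field_simp <;> ring

section expform
variable (m c k : ℝ)

noncomputable def sg : ℝ := c / (2*m)
noncomputable def om : ℝ := Real.sqrt (4*k*m - c^2) / (2*m)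

lemma om_pos (hm : 0 < m) (hud : c^2 < 4*k*m) : 0 < om m c k :=
  div_pos (Real.sqrt_pos.2 (by linarith)) (by linarith)

noncomputable def Mt (t : ℝ) : Matrix (Fin 2) (Fin 2) ℝ :=
  (Real.exp (-(sg m c) * t) * Real.cos (om m c k * t)) • (1 : Matrix (Fin 2) (Fin 2) ℝ)
  + ((Real.exp (-(sg m c) * t) * Real.sin (om m c k * t)) / om m c k) • Bmat m c k

lemma A_eq : Amat m c k = Bmat m c k - (sg m c) • 1 := by
  simp [Bmat, sg]

lemma key_AM (hm : 0 < m) (hud : c^2 < 4*k*m) (t : ℝ) :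
    Amat m c k * Mt m c k t =
      (-(sg m c) * (Real.exp (-(sg m c) * t) * Real.cos (om m c k * t))
        - om m c k * (Real.exp (-(sg m c) * t) * Real.sin (om m c k * t))) • (1 : Matrix (Fin 2) (Fin 2) ℝ)
      + ((Real.exp (-(sg m c) * t) * Real.cos (om m c k * t))
        - (sg m c) * ((Real.exp (-(sg m c) * t) * Real.sin (om m c k * t)) / om m c k)) • Bmat m c k := by
  have hω := om_pos m c k hm hud
  have hB := B_sq m c k hm hud.le
  have hom : Real.sqrt (4*k*m - c^2) / (2*m) = om m c k := rfl
  rw [hom] at hB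
  simp only [A_eq, Mt, sub_mul, mul_add, Matrix.mul_smul, Matrix.smul_mul, mul_one,
    one_mul, hB, smul_smul]
  match_scalars <;> field_simp <;> ring

theorem exp_eq (hm : 0 < m) (hud : c^2 < 4*k*m) (t : ℝ) :
    NormedSpace.exp (t • Amat m c k) = Mt m c k t := by
  letI : SeminormedRing (Matrix (Fin 2) (Fin 2) ℝ) := Matrix.linftyOpSemiNormedRing
  letI : NormedRing (Matrix (Fin 2) (Fin 2) ℝ) := Matrix.linftyOpNormedRing
  letI : NormedAlgebra ℝ (Matrix (Fin 2) (Fin 2) ℝ) := Matrix.linftyOpNormedAlgebra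
  have hω := om_pos m c k hm hud
  -- derivative of Mt
  have hMD : ∀ u : ℝ, HasDerivAt (Mt m c k) (Amat m c k * Mt m c k u) u := by
    intro u
    have h1 : HasDerivAt (fun s : ℝ => -(sg m c) * s) (-(sg m c)) u := by
      simpa using (hasDerivAt_id u).const_mul (-(sg m c))
    have hexp1 : HasDerivAt (fun s : ℝ => Real.exp (-(sg m c) * s))
        (Real.exp (-(sg m c) * u) * -(sg m c)) u := (Real.hasDerivAt_exp _).comp u h1
    have h2 : HasDerivAt (fun s : ℝ => om m c k * s) (om m c k) u := by
      simpa using (hasDerivAt_id u).const_mul (om m c k)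
    have hcos : HasDerivAt (fun s : ℝ => Real.cos (om m c k * s))
        (-Real.sin (om m c k * u) * om m c k) u := (Real.hasDerivAt_cos _).comp u h2
    have hsin : HasDerivAt (fun s : ℝ => Real.sin (om m c k * s))
        (Real.cos (om m c k * u) * om m c k) u := (Real.hasDerivAt_sin _).comp u h2
    have hf := hexp1.mul hcos
    have hg := (hexp1.mul hsin).div_const (om m c k)
    have hM := (hf.smul_const (1 : Matrix (Fin 2) (Fin 2) ℝ)).add (hg.smul_const (Bmat m c k))
    have hDeq : (Real.exp (-(sg m c) * u) * -(sg m c) * Real.cos (om m c k * u) +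
          Real.exp (-(sg m c) * u) * (-Real.sin (om m c k * u) * om m c k)) • (1 : Matrix (Fin 2) (Fin 2) ℝ) +
        ((Real.exp (-(sg m c) * u) * -(sg m c) * Real.sin (om m c k * u) +
          Real.exp (-(sg m c) * u) * (Real.cos (om m c k * u) * om m c k)) / om m c k) • Bmat m c k
        = Amat m c k * Mt m c k u := by
      rw [key_AM m c k hm hud u]
      match_scalars <;> field_simp <;> ring
    exact hDeq ▸ (by exact hM)
  have hE : ∀ u : ℝ, HasDerivAt (fun s : ℝ => NormedSpace.exp (s • (-Amat m c k)))
      (NormedSpace.exp (u • (-Amat m c k)) * (-Amat m c k)) u := fun u =>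
    hasDerivAt_exp_smul_const (𝕂 := ℝ) _ u
  set G : ℝ → Matrix (Fin 2) (Fin 2) ℝ :=
    fun u => NormedSpace.exp (u • (-Amat m c k)) * Mt m c k u with hGdef
  have hG : ∀ u : ℝ, HasDerivAt G 0 u := by
    intro u
    have h := (hE u).mul (hMD u)
    have : NormedSpace.exp (u • (-Amat m c k)) * (-Amat m c k) * Mt m c k u +
        NormedSpace.exp (u • (-Amat m c k)) * (Amat m c k * Mt m c k u) = 0 := by
      rw [mul_assoc, neg_mul, mul_neg]
      exact neg_add_cancel _
    exact this ▸ h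
  have hconst : ∀ u : ℝ, G u = G 0 := fun u =>
    is_const_of_deriv_eq_zero (fun x => (hG x).differentiableAt) (fun x => (hG x).deriv) u 0
  have hG0 : G 0 = 1 := by
    simp [hGdef, Mt]
  have hinv : NormedSpace.exp (t • Amat m c k) * NormedSpace.exp (t • (-Amat m c k)) = 1 := by
    rw [← Matrix.exp_add_of_commute (t • Amat m c k) (t • (-Amat m c k)) (by rw [smul_neg]; exact (Commute.refl _).neg_right)]
    rw [smul_neg, add_neg_cancel, NormedSpace.exp_zero]
  calc NormedSpace.exp (t • Amat m c k)
      = NormedSpace.exp (t • Amat m c k) * G 0 := by rw [hG0, mul_one]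
    _ = NormedSpace.exp (t • Amat m c k) * G t := by rw [hconst t]
    _ = (NormedSpace.exp (t • Amat m c k) * NormedSpace.exp (t • (-Amat m c k))) * Mt m c k t := by
        rw [hGdef, mul_assoc]
    _ = Mt m c k t := by rw [hinv, one_mul]

lemma flow_apply0 (hm : 0 < m) (hud : c^2 < 4*k*m) (t θ v : ℝ) :
    flow m c k t ![θ, v] 0 =
      Real.exp (-(sg m c) * t) * (θ * Real.cos (om m c k * t)
        + ((sg m c * θ + v)/om m c k) * Real.sin (om m c k * t)) := by
  rw [flow, exp_eq m c k hm hud t]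
  simp [Mt, Bmat_apply, Amat, Matrix.mulVec, dotProduct, Fin.sum_univ_two, sg]
  ring

lemma flow_apply1 (hm : 0 < m) (hud : c^2 < 4*k*m) (t θ v : ℝ) :
    flow m c k t ![θ, v] 1 =
      Real.exp (-(sg m c) * t) * (v * Real.cos (om m c k * t)
        - (((k/m) * θ + sg m c * v)/om m c k) * Real.sin (om m c k * t)) := by
  rw [flow, exp_eq m c k hm hud t]
  simp [Mt, Bmat_apply, Amat, Matrix.mulVec, dotProduct, Fin.sum_univ_two, sg]
  ring

section hitting
variable (θ v : ℝ)

noncomputable def bb (m c k θ v : ℝ) : ℝ := (sg m c * θ + v) / om m c k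
noncomputable def rr (m c k θ v : ℝ) : ℝ := Real.sqrt (θ^2 + bb m c k θ v ^ 2)
noncomputable def al (m c k θ v : ℝ) : ℝ := Real.arctan (bb m c k θ v / θ)
noncomputable def tstar (m c k θ v : ℝ) : ℝ := (al m c k θ v + Real.pi/2) / om m c k

variable {m c k : ℝ} (hm : 0 < m) (hc : 0 < c) (hk : 0 < k) (hud : c^2 < 4*k*m)
  (hθ : 0 < θ) (hv : 0 < v)

include hm hc hud hθ hv

lemma bb_pos : 0 < bb m c k θ v := by
  have hω := om_pos m c k hm hud
  have hσ : 0 < sg m c := div_pos hc (by linarith)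
  exact div_pos (by nlinarith) hω

omit hm hc hud hv in
lemma rr_pos : 0 < rr m c k θ v :=
  Real.sqrt_pos.2 (by positivity)

lemma al_mem : 0 < al m c k θ v ∧ al m c k θ v < Real.pi/2 := by
  constructor
  · rw [al, ← Real.arctan_zero]
    exact Real.arctan_strictMono (div_pos (bb_pos θ v hm hc hud hθ hv) hθ)
  · exact Real.arctan_lt_pi_div_two _

lemma cos_al : Real.cos (al m c k θ v) = θ / rr m c k θ v := by
  have hb := bb_pos θ v hm hc hud hθ hv
  rw [al, Real.cos_arctan, rr]
  rw [show θ^2 + bb m c k θ v ^2 = θ^2 * (1 + (bb m c k θ v / θ)^2) by field_simp]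
  rw [Real.sqrt_mul (by positivity), Real.sqrt_sq hθ.le]
  rw [eq_div_iff (by positivity)]
  field_simp

lemma sin_al : Real.sin (al m c k θ v) = bb m c k θ v / rr m c k θ v := by
  have hb := bb_pos θ v hm hc hud hθ hv
  rw [al, Real.sin_arctan, rr]
  rw [show θ^2 + bb m c k θ v ^2 = θ^2 * (1 + (bb m c k θ v / θ)^2) by field_simp]
  rw [Real.sqrt_mul (by positivity), Real.sqrt_sq hθ.le]
  rw [div_eq_div_iff (by positivity) (by positivity)]
  field_simp

lemma flow0_eq_cos (t : ℝ) :
    flow m c k t ![θ, v] 0 =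
      Real.exp (-(sg m c) * t) * rr m c k θ v * Real.cos (om m c k * t - al m c k θ v) := by
  have hr := rr_pos (m := m) (c := c) (k := k) θ v hθ
  have key : ∀ ψ : ℝ, rr m c k θ v * Real.cos (ψ - al m c k θ v)
      = θ * Real.cos ψ + bb m c k θ v * Real.sin ψ := by
    intro ψ
    rw [Real.cos_sub, cos_al θ v hm hc hud hθ hv, sin_al θ v hm hc hud hθ hv]
    field_simp
  rw [flow_apply0 m c k hm hud t θ v, mul_assoc, key (om m c k * t)]
  rfl

lemma isLeast_tstar :
    IsLeast {t : ℝ | 0 < t ∧ flow m c k t ![θ, v] 0 = 0} (tstar m c k θ v) := by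
  have hω := om_pos m c k hm hud
  have hr := rr_pos (m := m) (c := c) (k := k) θ v hθ
  have hal := al_mem θ v hm hc hud hθ hv
  have hπ := Real.pi_pos
  constructor
  · refine ⟨by rw [tstar]; exact div_pos (by linarith [hal.1]) hω, ?_⟩
    rw [flow0_eq_cos θ v hm hc hud hθ hv]
    have : om m c k * tstar m c k θ v - al m c k θ v = Real.pi/2 := by
      rw [tstar]; field_simp; ring
    rw [this, Real.cos_pi_div_two, mul_zero]
  · rintro t ⟨ht, hzero⟩
    rw [flow0_eq_cos θ v hm hc hud hθ hv] at hzero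
    have hcz : Real.cos (om m c k * t - al m c k θ v) = 0 := by
      have he := Real.exp_pos (-(sg m c) * t)
      rcases mul_eq_zero.1 hzero with h | h
      · rcases mul_eq_zero.1 h with h' | h'
        · exact absurd h' he.ne'
        · exact absurd h' hr.ne'
      · exact h
    rw [Real.cos_eq_zero_iff] at hcz
    obtain ⟨n, hn⟩ := hcz
    have hlow : -(Real.pi/2) < om m c k * t - al m c k θ v := by nlinarith
    have hn0 : 0 ≤ n := by
      by_contra hneg
      push_neg at hneg
      have : (n : ℝ) ≤ -1 := by exact_mod_cast (by omega : n ≤ -1)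
      nlinarith
    have : Real.pi/2 ≤ om m c k * t - al m c k θ v := by
      rw [hn]
      have : (0:ℝ) ≤ (n:ℝ) := by exact_mod_cast hn0
      nlinarith
    rw [tstar, div_le_iff₀ hω]
    nlinarith
end hitting

section pmap
variable {m c k : ℝ} (θ : ℝ)

noncomputable def Pfun (m c k θ v : ℝ) : ℝ :=
  om m c k * rr m c k θ v * Real.exp (-(sg m c) * tstar m c k θ v)

variable (hm : 0 < m) (hc : 0 < c) (hk : 0 < k) (hud : c^2 < 4*k*m) (hθ : 0 < θ)

include hm hc hud hθ

lemma hasDerivAt_rr (v : ℝ) :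
    HasDerivAt (fun w => rr m c k θ w) (bb m c k θ v / (om m c k * rr m c k θ v)) v := by
  have hω := om_pos m c k hm hud
  have hq : HasDerivAt (fun w => θ^2 + bb m c k θ w ^ 2)
      (2 * bb m c k θ v ^ 1 * (1/om m c k)) v := by
    have hbb : HasDerivAt (fun w => bb m c k θ w) (1/om m c k) v := by
      simpa [bb, one_div] using ((hasDerivAt_id v).const_add (sg m c * θ)).div_const (om m c k)
    exact (hbb.pow 2).const_add (θ^2)
  have hpos : θ^2 + bb m c k θ v ^ 2 ≠ 0 := by positivity
  have h := (Real.hasDerivAt_sqrt hpos).comp v hq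
  refine h.congr_deriv (Eq.symm ?_)
  rw [rr]
  field_simp

lemma hasDerivAt_tstar (v : ℝ) :
    HasDerivAt (fun w => tstar m c k θ w) (θ / (om m c k ^2 * rr m c k θ v ^2)) v := by
  have hω := om_pos m c k hm hud
  have hbb : HasDerivAt (fun w => bb m c k θ w / θ) (1/(om m c k * θ)) v := by
    have : HasDerivAt (fun w => bb m c k θ w) (1/om m c k) v := by
      simpa [bb, one_div] using ((hasDerivAt_id v).const_add (sg m c * θ)).div_const (om m c k)
    simpa [one_div, div_eq_mul_inv, mul_comm] using this.div_const θ
  have hat := (Real.hasDerivAt_arctan (bb m c k θ v / θ)).comp v hbb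
  have h := (hat.add_const (Real.pi/2)).div_const (om m c k)
  refine h.congr_deriv (Eq.symm ?_)
  rw [rr, Real.sq_sqrt (by positivity)]
  field_simp

lemma hasDerivAt_Pfun (v : ℝ) :
    HasDerivAt (fun w => Pfun m c k θ w)
      (Real.exp (-(sg m c) * tstar m c k θ v) * v / (om m c k * rr m c k θ v)) v := by
  have hω := om_pos m c k hm hud
  have hr : 0 < rr m c k θ v := rr_pos (m := m) (c := c) (k := k) θ v hθ
  have hE : HasDerivAt (fun w => Real.exp (-(sg m c) * tstar m c k θ w))
      (Real.exp (-(sg m c) * tstar m c k θ v) *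
        (-(sg m c) * (θ / (om m c k ^2 * rr m c k θ v ^2)))) v :=
    (Real.hasDerivAt_exp _).comp v ((hasDerivAt_tstar θ hm hc hud hθ v).const_mul (-(sg m c)))
  have h := ((hasDerivAt_rr θ hm hc hud hθ v).const_mul (om m c k)).mul hE
  refine h.congr_deriv (Eq.symm ?_)
  simp only [Pfun, bb, sg]
  field_simp
  ring
end pmap


section final
variable {m c k : ℝ} (θ : ℝ) (hm : 0 < m) (hc : 0 < c) (hk : 0 < k)
  (hud : c^2 < 4*k*m) (hθ : 0 < θ)

include hm hc hud hθ

lemma halfReturn_eq (τ : (Fin 2 → ℝ) → ℝ) (hτ : IsFirstHittingTime m c k τ)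
    (v : ℝ) (hv : 0 < v) : halfReturn m c k θ τ v = Pfun m c k θ v := by
  have hω := om_pos m c k hm hud
  have hr : 0 < rr m c k θ v := rr_pos (m := m) (c := c) (k := k) θ v hθ
  have hne : (![θ, v] : Fin 2 → ℝ) ≠ 0 := by
    intro h
    have h0 := congrFun h 0
    simp at h0
    exact hθ.ne' h0
  have hτeq : τ ![θ, v] = tstar m c k θ v :=
    (hτ _ hne).unique (isLeast_tstar θ v hm hc hud hθ hv)
  have hkm : k/m = sg m c ^2 + om m c k ^2 := by
    have h := om_sq m c k hm hud.le
    rw [show Real.sqrt (4*k*m - c^2)/(2*m) = om m c k from rfl,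
      show c/(2*m) = sg m c from rfl] at h
    linarith
  have hwt : om m c k * tstar m c k θ v = al m c k θ v + Real.pi/2 := by
    rw [tstar]; field_simp
  rw [halfReturn, hτeq, flow_apply1 m c k hm hud _ θ v, hwt, Real.cos_add_pi_div_two,
    Real.sin_add_pi_div_two, sin_al θ v hm hc hud hθ hv, cos_al θ v hm hc hud hθ hv, Pfun]
  have key : v * bb m c k θ v + (((k/m)*θ + sg m c * v)/om m c k)*θ
      = om m c k * rr m c k θ v ^ 2 := by
    rw [rr, Real.sq_sqrt (by positivity), bb, hkm]
    field_simp
    ring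
  have expand : -(Real.exp (-sg m c * tstar m c k θ v) *
        (v * -(bb m c k θ v / rr m c k θ v) -
          (k / m * θ + sg m c * v) / om m c k * (θ / rr m c k θ v)))
      = Real.exp (-sg m c * tstar m c k θ v) *
        (v * bb m c k θ v + (((k/m)*θ + sg m c * v)/om m c k)*θ) / rr m c k θ v := by
    field_simp
    ring
  rw [expand, key]
  field_simp

lemma Pfun_strictMonoOn : StrictMonoOn (fun v => Pfun m c k θ v) (Set.Ici 0) := by
  have hω := om_pos m c k hm hud
  apply strictMonoOn_of_deriv_pos (convex_Ici 0)
  · exact fun x _ => (hasDerivAt_Pfun θ hm hc hud hθ x).continuousAt.continuousWithinAt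
  · intro x hx
    rw [interior_Ici] at hx
    rw [(hasDerivAt_Pfun θ hm hc hud hθ x).deriv]
    have hr : 0 < rr m c k θ x := rr_pos (m := m) (c := c) (k := k) θ x hθ
    have hE := Real.exp_pos (-(sg m c) * tstar m c k θ x)
    exact div_pos (mul_pos hE hx) (mul_pos hω hr)

lemma Pfun_div_strictAntiOn : StrictAntiOn (fun v => Pfun m c k θ v / v) (Set.Ioi 0) := by
  have hω := om_pos m c k hm hud
  have hσ : 0 < sg m c := div_pos hc (by linarith)
  apply strictAntiOn_of_deriv_neg (convex_Ioi 0)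
  · intro x hx
    exact (((hasDerivAt_Pfun θ hm hc hud hθ x).div (hasDerivAt_id x)
      (ne_of_gt hx)).continuousAt).continuousWithinAt
  · intro x hx
    rw [interior_Ioi] at hx
    have hr : 0 < rr m c k θ x := rr_pos (m := m) (c := c) (k := k) θ x hθ
    have hE := Real.exp_pos (-(sg m c) * tstar m c k θ x)
    have hder := (hasDerivAt_Pfun θ hm hc hud hθ x).div (hasDerivAt_id x) (ne_of_gt hx)
    simp only [id_eq, mul_one] at hder
    rw [show deriv (fun v => Pfun m c k θ v / v) x = _ from hder.deriv]
    have hx2 : x^2 < om m c k ^2 * rr m c k θ x ^2 := by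
      have heq : om m c k ^2 * rr m c k θ x ^2 = om m c k ^2 * θ^2 + (sg m c * θ + x)^2 := by
        rw [rr, Real.sq_sqrt (by positivity), bb]
        field_simp
      nlinarith [mul_pos hσ hθ, mul_pos (mul_pos hσ hθ) hx, mul_pos hω hθ]
    apply div_neg_of_neg_of_pos _ (pow_pos hx 2)
    have hnum : Real.exp (-sg m c * tstar m c k θ x) * x / (om m c k * rr m c k θ x) * x
        < Pfun m c k θ x := by
      rw [Pfun, div_mul_eq_mul_div, div_lt_iff₀ (by positivity)]
      nlinarith [hE, hx2]
    linarith
end final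
/-- Lemma 2(iii), strict decrease across jumps, return-map form:
under Assumption 1 and `θ̂ > 0`, if `v* > 0` is the unique fixed point of `P`,
then for every `v > 0` with `v ≠ v*`: if `v > v*` then `v* < P(v) < v`, and if
`v < v*` then `v < P(v) < v*`; in particular `|P(v) − v*| < |v − v*|`. -/
theorem stmt13 (m c k θ : ℝ) (hm : 0 < m) (hc : 0 < c) (hk : 0 < k)
    (hud : c ^ 2 < 4 * k * m) (hθ : 0 < θ)
    (τ : (Fin 2 → ℝ) → ℝ) (hτ : IsFirstHittingTime m c k τ)
    (vstar : ℝ) (hv : 0 < vstar) (hfix : halfReturn m c k θ τ vstar = vstar)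
    (huniq : ∀ v : ℝ, 0 < v → halfReturn m c k θ τ v = v → v = vstar) :
    ∀ v : ℝ, 0 < v → v ≠ vstar →
      (vstar < v → vstar < halfReturn m c k θ τ v ∧ halfReturn m c k θ τ v < v) ∧
      (v < vstar → v < halfReturn m c k θ τ v ∧ halfReturn m c k θ τ v < vstar) ∧
      |halfReturn m c k θ τ v - vstar| < |v - vstar| := by
  have hud' : c^2 < 4*k*m := hud
  have hP : ∀ w : ℝ, 0 < w → halfReturn m c k θ τ w = Pfun m c k θ w :=
    fun w hw => halfReturn_eq θ hm hc hud' hθ τ hτ w hw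
  have hfix' : Pfun m c k θ vstar = vstar := by rw [← hP vstar hv]; exact hfix
  have mono := Pfun_strictMonoOn θ hm hc hud' hθ
  have anti := Pfun_div_strictAntiOn θ hm hc hud' hθ
  intro v hv0 hne
  rw [hP v hv0]
  have hgt_case : vstar < v → vstar < Pfun m c k θ v ∧ Pfun m c k θ v < v := by
    intro hgt
    constructor
    · have := mono (Set.mem_Ici.2 hv.le) (Set.mem_Ici.2 hv0.le) hgt
      simp only at this
      rwa [hfix'] at this
    · have h2 := anti (Set.mem_Ioi.2 hv) (Set.mem_Ioi.2 hv0) hgt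
      simp only at h2
      rw [hfix', div_self hv.ne'] at h2
      exact (div_lt_one hv0).1 h2
  have hlt_case : v < vstar → v < Pfun m c k θ v ∧ Pfun m c k θ v < vstar := by
    intro hlt
    constructor
    · have h2 := anti (Set.mem_Ioi.2 hv0) (Set.mem_Ioi.2 hv) hlt
      simp only at h2
      rw [hfix', div_self hv.ne'] at h2
      exact (one_lt_div hv0).1 h2
    · have := mono (Set.mem_Ici.2 hv0.le) (Set.mem_Ici.2 hv.le) hlt
      simp only at this
      rwa [hfix'] at this
  refine ⟨hgt_case, hlt_case, ?_⟩
  rcases lt_or_gt_of_ne hne with hlt | hgt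
  · obtain ⟨h1, h2⟩ := hlt_case hlt
    rw [abs_of_neg (by linarith), abs_of_neg (by linarith)]
    linarith
  · obtain ⟨h1, h2⟩ := hgt_case hgt
    rw [abs_of_pos (by linarith), abs_of_pos (by linarith)]
    linarith
end expform
end
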